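/- Let m : ℕ → ℝ be completely multiplicative with values in {-1, 0, 1}, and suppose for all x > 0 that ∑_{n=1}^∞ λ(n)·n·f(2πn²/x) > 0, where λ is the Liouville function and f(y) = (1/y)∫_y^∞ e^{-t}/t dt. If m differs from λ at only finitely many primes, then ∑_{n=1}^∞ m(n)·n·f(2πn²/x) ≥ ∑_{n=1}^∞ λ(n)·n·f(2πn²/x) for all x > 0. -/

import Mathlib

noncomputable def f (y : ℝ) : ℝ := (1 / y) * ∫ t in Set.Ioi y, Real.exp (-t) / t

noncomputable def liouville (n : ℕ) : ℝ := (-1) ^ (ArithmeticFunction.cardFactors n)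

/-!
Write `T_b(x) = ∑ b(n) w_x(n)` with `w_x(n) = n f(2πn²/x)`; the only property of the kernel that
matters is the scaling `w_x(d n) = d w_{x/d²}(n)`. For a completely multiplicative `b` and a prime
`p`, splitting `n = p^k j` with `p ∤ j` gives `T_b(x) = ∑_k (b(p) p)^k B_b(x/p^{2k})`, where `B_b`
sums over `j` coprime to `p`. When `b(p) = -1` this yields `B_b(x) = T_b(x) + p T_b(x/p²)`, so if
`T_b > 0` everywhere then `B_b ≥ T_b` and `B_b > 0`. Changing `b(p)` to a value in `[0, 1]` leaves
`B_b` unchanged and makes every term of the series nonnegative, so the new sum is at least its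
`k = 0` term `B_b(x) ≥ T_b(x)`. Starting from `λ`, change the finitely many primes where `m ≠ λ`
one at a time.
-/

open Real MeasureTheory

section MultiplicativeExtension

variable {R : Type*} [CommMonoidWithZero R]

noncomputable def multiplicativeExtension (g : ℕ → R) : ℕ →*₀ R where
  toFun n := if n = 0 then 0 else n.factorization.prod fun p k => g p ^ k
  map_zero' := if_pos rfl
  map_one' := by simp
  map_mul' a b := by
    rcases eq_or_ne a 0 with rfl | ha
    · simp
    rcases eq_or_ne b 0 with rfl | hb
    · simp
    simp only [if_neg ha, if_neg hb, if_neg (mul_ne_zero ha hb), Nat.factorization_mul ha hb]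
    exact Finsupp.prod_add_index' (fun _ => pow_zero _) fun _ _ _ => pow_add _ _ _

lemma multiplicativeExtension_apply_prime (g : ℕ → R) {p : ℕ} (hp : p.Prime) :
    multiplicativeExtension g p = g p := by
  simp [multiplicativeExtension, hp.ne_zero, hp.factorization]

lemma multiplicativeExtension_congr {g g' : ℕ → R} {n : ℕ}
    (h : ∀ q, q.Prime → q ∣ n → g q = g' q) :
    multiplicativeExtension g n = multiplicativeExtension g' n := by
  rcases eq_or_ne n 0 with rfl | hn
  · simp
  simp only [multiplicativeExtension, MonoidWithZeroHom.coe_mk, ZeroHom.coe_mk, if_neg hn]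
  refine Finsupp.prod_congr fun q hq => ?_
  rw [Nat.support_factorization] at hq
  rw [h q (Nat.prime_of_mem_primeFactors hq) (Nat.dvd_of_mem_primeFactors hq)]

lemma eq_multiplicativeExtension {f : ℕ → R} (h1 : f 1 = 1)
    (hmul : ∀ a b, a ≠ 0 → b ≠ 0 → f (a * b) = f a * f b) {n : ℕ} (hn : n ≠ 0) :
    f n = multiplicativeExtension f n := by
  induction n using Nat.recOnMul with
  | zero => exact absurd rfl hn
  | one => rw [h1, map_one]
  | prime p hp => rw [multiplicativeExtension_apply_prime f hp]
  | mul a b iha ihb =>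
    have ha : a ≠ 0 := left_ne_zero_of_mul hn
    have hb : b ≠ 0 := right_ne_zero_of_mul hn
    rw [hmul a b ha hb, map_mul, iha ha, ihb hb]

end MultiplicativeExtension

lemma abs_apply_le_one_of_prime {χ : ℕ →*₀ ℝ} (h : ∀ p, p.Prime → |χ p| ≤ 1) (n : ℕ) :
    |χ n| ≤ 1 := by
  induction n using Nat.recOnMul with
  | zero => simp
  | one => simp
  | prime p hp => exact h p hp
  | mul a b iha ihb => rw [map_mul, abs_mul]; exact mul_le_one₀ iha (abs_nonneg _) ihb

lemma Nat.Prime.injective_pow_mul {p : ℕ} (hp : p.Prime) :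
    Function.Injective fun kj : ℕ × {j : ℕ // ¬ p ∣ j} => p ^ kj.1 * kj.2 := by
  have hval : ∀ k j, ¬ p ∣ j → (p ^ k * j).factorization p = k := fun k j hj => by
    rw [Nat.factorization_mul (pow_ne_zero _ hp.ne_zero) (by rintro rfl; exact hj (dvd_zero p)),
      Finsupp.add_apply, hp.factorization_pow, Finsupp.single_eq_same,
      Nat.factorization_eq_zero_of_not_dvd hj, add_zero]
  rintro ⟨k, j, hj⟩ ⟨k', j', hj'⟩ h
  simp only at h
  obtain rfl : k = k' := by rw [← hval k j hj, ← hval k' j' hj', h]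
  obtain rfl : j = j' := Nat.eq_of_mul_eq_mul_left (pow_pos hp.pos k) h
  rfl

lemma Nat.Prime.mem_range_pow_mul {p n : ℕ} (hp : p.Prime) (hn : n ≠ 0) :
    n ∈ Set.range fun kj : ℕ × {j : ℕ // ¬ p ∣ j} => p ^ kj.1 * kj.2 :=
  ⟨(n.factorization p, ⟨n / p ^ n.factorization p, Nat.not_dvd_ordCompl hp hn⟩),
    Nat.ordProj_mul_ordCompl_eq_self n p⟩

section WeightedSum

variable (w : ℝ → ℕ → ℝ)

noncomputable def weightedSum (b : ℕ → ℝ) (x : ℝ) : ℝ := ∑' n, b n * w x n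

noncomputable def coprimeWeightedSum (p : ℕ) (b : ℕ → ℝ) (x : ℝ) : ℝ :=
  ∑' j : {j : ℕ // ¬ p ∣ j}, b j * w x j

variable {w}

lemma weight_zero_of_scale (hscale : ∀ x (d n : ℕ), w x (d * n) = d * w (x / d ^ 2) n) (x : ℝ) :
    w x 0 = 0 := by
  simpa using hscale x 0 0

lemma weightedSum_congr (hscale : ∀ x (d n : ℕ), w x (d * n) = d * w (x / d ^ 2) n)
    {b b' : ℕ → ℝ} (h : ∀ n, n ≠ 0 → b n = b' n) : weightedSum w b = weightedSum w b' := by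
  ext x
  refine tsum_congr fun n => ?_
  rcases eq_or_ne n 0 with rfl | hn
  · simp [weight_zero_of_scale hscale]
  · rw [h n hn]

lemma summable_mul_weight {b : ℕ → ℝ} (hb : ∀ n, |b n| ≤ 1) {x : ℝ} (hw : Summable (w x)) :
    Summable fun n => b n * w x n :=
  hw.norm.of_norm_bounded fun n => by
    rw [norm_mul, Real.norm_eq_abs (b n)]
    exact mul_le_of_le_one_left (norm_nonneg _) (hb n)

theorem hasSum_weightedSum_prime_decomposition (hw : ∀ x, 0 < x → Summable (w x))
    (hscale : ∀ x (d n : ℕ), w x (d * n) = d * w (x / d ^ 2) n) {χ : ℕ →*₀ ℝ}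
    (hχ : ∀ n, |χ n| ≤ 1) {p : ℕ} (hp : p.Prime) {x : ℝ} (hx : 0 < x) :
    HasSum (fun k : ℕ => (χ p * p) ^ k * coprimeWeightedSum w p χ (x / ((p : ℝ) ^ 2) ^ k))
      (weightedSum w χ x) := by
  have hp0 : (0 : ℝ) < p := by exact_mod_cast hp.pos
  have hsupport : ∀ n ∉ Set.range fun kj : ℕ × {j : ℕ // ¬ p ∣ j} => p ^ kj.1 * kj.2,
      χ n * w x n = 0 := fun n hn => by
    obtain rfl : n = 0 := by_contra fun h => hn (hp.mem_range_pow_mul h)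
    simp [weight_zero_of_scale hscale]
  have hterm : ∀ k j : ℕ, χ (p ^ k * j) * w x (p ^ k * j)
      = (χ p * p) ^ k * (χ j * w (x / ((p : ℝ) ^ 2) ^ k) j) := fun k j => by
    rw [map_mul, map_pow, hscale]
    push_cast
    rw [← pow_mul, mul_comm k, pow_mul]
    ring
  refine ((hp.injective_pow_mul.hasSum_iff hsupport).mpr
    (summable_mul_weight hχ (hw x hx)).hasSum).prod_fiberwise fun k => ?_
  simp only [Function.comp_def, hterm]
  exact ((summable_mul_weight hχ (hw _ (by positivity))).comp_injective
    Subtype.val_injective).hasSum.mul_left _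

lemma coprimeWeightedSum_eq_of_apply_prime_eq_neg_one (hw : ∀ x, 0 < x → Summable (w x))
    (hscale : ∀ x (d n : ℕ), w x (d * n) = d * w (x / d ^ 2) n) {χ : ℕ →*₀ ℝ}
    (hχ : ∀ n, |χ n| ≤ 1) {p : ℕ} (hp : p.Prime) (hχp : χ p = -1) {x : ℝ} (hx : 0 < x) :
    coprimeWeightedSum w p χ x = weightedSum w χ x + p * weightedSum w χ (x / (p : ℝ) ^ 2) := by
  have hp0 : (0 : ℝ) < p := by exact_mod_cast hp.pos
  have hshift : ∀ k : ℕ,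
      (χ p * p) ^ (k + 1) * coprimeWeightedSum w p χ (x / ((p : ℝ) ^ 2) ^ (k + 1))
        = χ p * p *
          ((χ p * p) ^ k * coprimeWeightedSum w p χ (x / (p : ℝ) ^ 2 / ((p : ℝ) ^ 2) ^ k)) :=
      fun k => by rw [pow_succ', pow_succ', div_div, mul_assoc]
  have htail := (hasSum_nat_add_iff' 1).mpr
    (hasSum_weightedSum_prime_decomposition hw hscale hχ hp hx)
  simp only [hshift, Finset.sum_range_one, pow_zero, one_mul, div_one] at htail
  have := htail.unique <| (hasSum_weightedSum_prime_decomposition hw hscale hχ hp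
    (x := x / (p : ℝ) ^ 2) (by positivity)).mul_left (χ p * p)
  rw [hχp] at this
  linarith

theorem weightedSum_le_of_apply_prime_nonneg (hw : ∀ x, 0 < x → Summable (w x))
    (hscale : ∀ x (d n : ℕ), w x (d * n) = d * w (x / d ^ 2) n) {χ χ' : ℕ →*₀ ℝ}
    (hχ : ∀ n, |χ n| ≤ 1) (hχ' : ∀ n, |χ' n| ≤ 1) {p : ℕ} (hp : p.Prime)
    (hχp : 0 ≤ χ p) (hχ'p : χ' p = -1) (hagree : ∀ j, ¬ p ∣ j → χ j = χ' j)
    (hpos : ∀ y, 0 < y → 0 < weightedSum w χ' y) {x : ℝ} (hx : 0 < x) :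
    weightedSum w χ' x ≤ weightedSum w χ x := by
  have hp0 : (0 : ℝ) < p := by exact_mod_cast hp.pos
  have hcoprime : coprimeWeightedSum w p χ = coprimeWeightedSum w p χ' := by
    ext y
    exact tsum_congr fun j => by rw [hagree j j.2]
  have hrec : ∀ y, 0 < y → coprimeWeightedSum w p χ y
      = weightedSum w χ' y + p * weightedSum w χ' (y / (p : ℝ) ^ 2) := fun y hy => by
    rw [hcoprime, coprimeWeightedSum_eq_of_apply_prime_eq_neg_one hw hscale hχ' hp hχ'p hy]
  have hcoprime_pos : ∀ y, 0 < y → 0 < coprimeWeightedSum w p χ y := fun y hy => by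
    rw [hrec y hy]
    have := hpos (y / (p : ℝ) ^ 2) (by positivity)
    have := hpos y hy
    positivity
  calc weightedSum w χ' x
      ≤ coprimeWeightedSum w p χ x := by
        rw [hrec x hx]
        have := mul_pos hp0 (hpos (x / (p : ℝ) ^ 2) (by positivity))
        linarith
    _ ≤ weightedSum w χ x := by
        refine le_of_eq_of_le (by simp) <|
          le_hasSum (hasSum_weightedSum_prime_decomposition hw hscale hχ hp hx) 0 fun k _ => ?_
        have := hcoprime_pos (x / ((p : ℝ) ^ 2) ^ k) (by positivity)
        positivity

end WeightedSum

theorem weightedSum_le_weightedSum_multiplicativeExtension {w : ℝ → ℕ → ℝ}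
    (hw : ∀ x, 0 < x → Summable (w x))
    (hscale : ∀ x (d n : ℕ), w x (d * n) = d * w (x / d ^ 2) n)
    (hpos : ∀ x, 0 < x → 0 < weightedSum w (multiplicativeExtension fun _ => -1) x)
    {g : ℕ → ℝ} (S : Finset ℕ) (hS : ∀ q ∈ S, q.Prime ∧ 0 ≤ g q ∧ g q ≤ 1) {x : ℝ} (hx : 0 < x) :
    weightedSum w (multiplicativeExtension fun _ => -1) x
      ≤ weightedSum w (multiplicativeExtension fun q => if q ∈ S then g q else -1) x := by
  classical
  induction S using Finset.induction_on generalizing x with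
  | empty => simp
  | insert p S hpS ih =>
    obtain ⟨hp, hgp, -⟩ := hS p (Finset.mem_insert_self p S)
    have ih := fun y (hy : 0 < y) => ih (fun q hq => hS q (Finset.mem_insert_of_mem hq)) hy
    have hbound : ∀ T : Finset ℕ, (∀ q ∈ T, 0 ≤ g q ∧ g q ≤ 1) →
        ∀ n, |multiplicativeExtension (fun q => if q ∈ T then g q else -1) n| ≤ 1 :=
      fun T hT => abs_apply_le_one_of_prime fun q hq => by
        rw [multiplicativeExtension_apply_prime _ hq]
        split_ifs with hqT
        · exact abs_le.mpr ⟨by linarith [(hT q hqT).1], (hT q hqT).2⟩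
        · simp
    refine (ih x hx).trans <| weightedSum_le_of_apply_prime_nonneg hw hscale
      (hbound _ fun q hq => (hS q hq).2)
      (hbound _ fun q hq => (hS q (Finset.mem_insert_of_mem hq)).2)
      hp ?_ ?_ (fun j hj => multiplicativeExtension_congr fun q _ hqj => ?_)
      (fun y hy => (hpos y hy).trans_le (ih y hy)) hx
    · rw [multiplicativeExtension_apply_prime _ hp, if_pos (Finset.mem_insert_self p S)]
      exact hgp
    · rw [multiplicativeExtension_apply_prime _ hp, if_neg hpS]
    · have hqp : q ≠ p := by rintro rfl; exact hj hqj
      simp [Finset.mem_insert, hqp]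

lemma f_nonneg {y : ℝ} (hy : 0 < y) : 0 ≤ f y :=
  mul_nonneg (by positivity) <| setIntegral_nonneg measurableSet_Ioi fun t (ht : y < t) => by
    have := hy.trans ht
    positivity

lemma f_le {y : ℝ} (hy : 0 < y) : f y ≤ exp (-y) / y ^ 2 := by
  have hint : ∫ t in Set.Ioi y, exp (-t) / t ≤ ∫ t in Set.Ioi y, exp (-t) / y := by
    refine integral_mono_of_nonneg ?_ ((integrableOn_exp_neg_Ioi y).div_const y) ?_ <;>
      filter_upwards [ae_restrict_mem measurableSet_Ioi] with t (ht : y < t)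
    · have := hy.trans ht
      positivity
    · exact div_le_div_of_nonneg_left (exp_pos _).le hy ht.le
  rw [integral_div, integral_exp_neg_Ioi] at hint
  calc f y ≤ 1 / y * (exp (-y) / y) := mul_le_mul_of_nonneg_left hint (by positivity)
    _ = exp (-y) / y ^ 2 := by ring

noncomputable def fWeight (x : ℝ) (n : ℕ) : ℝ := n * f (2 * π * n ^ 2 / x)

lemma fWeight_mul (x : ℝ) (d n : ℕ) : fWeight x (d * n) = d * fWeight (x / d ^ 2) n := by
  rcases eq_or_ne d 0 with rfl | hd
  · simp [fWeight]
  simp only [fWeight, div_div_eq_mul_div]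
  push_cast
  ring_nf

lemma summable_fWeight {x : ℝ} (hx : 0 < x) : Summable (fWeight x) := by
  set c := 2 * π / x
  have hc : 0 < c := by positivity
  refine ((summable_pow_mul_exp_neg_nat_mul 1 hc).mul_left (c ^ 2)⁻¹).of_nonneg_of_le
    (fun n => ?_) fun n => ?_
  · rcases Nat.eq_zero_or_pos n with rfl | hn
    · simp [fWeight]
    · exact mul_nonneg n.cast_nonneg (f_nonneg (by positivity))
  rcases Nat.eq_zero_or_pos n with rfl | hn
  · simp [fWeight]
  have hn1 : (1 : ℝ) ≤ n := by exact_mod_cast hn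
  have hy : 0 < c * n ^ 2 := by positivity
  calc fWeight x n = n * f (c * n ^ 2) := by rw [fWeight, mul_div_right_comm]
    _ ≤ n * (exp (-(c * n ^ 2)) / (c * n ^ 2) ^ 2) := by gcongr; exact f_le hy
    _ ≤ n * (exp (-(c * n)) / c ^ 2) := by
        gcongr
        · exact le_self_pow₀ hn1 two_ne_zero
        · exact le_mul_of_one_le_right hc.le (one_le_pow₀ hn1)
    _ = (c ^ 2)⁻¹ * (n ^ 1 * exp (-c * n)) := by ring_nf

lemma liouville_apply_prime {p : ℕ} (hp : p.Prime) : liouville p = -1 := by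
  simp [liouville, ArithmeticFunction.cardFactors_apply_prime hp]

lemma liouville_eq_multiplicativeExtension {n : ℕ} (hn : n ≠ 0) :
    liouville n = multiplicativeExtension (fun _ => -1) n := by
  refine eq_multiplicativeExtension (by simp [liouville]) (fun a b ha hb => ?_) hn |>.trans <|
    multiplicativeExtension_congr fun q hq _ => ?_
  · simp only [liouville, ArithmeticFunction.cardFactors_mul ha hb, pow_add]
  · exact liouville_apply_prime hq

open Real in
theorem mult_sum_ge_liouville_sum (m : ℕ → ℝ)
    (hone : m 1 = 1) (hmul : ∀ a b : ℕ, m (a * b) = m a * m b)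
    (hval : ∀ n, m n = -1 ∨ m n = 0 ∨ m n = 1)
    (hfin : {p : ℕ | p.Prime ∧ m p ≠ liouville p}.Finite)
    (hpos : ∀ x : ℝ, 0 < x → 0 < ∑' n : ℕ, liouville n * (n : ℝ) * f (2 * π * (n : ℝ) ^ 2 / x)) :
    ∀ x : ℝ, 0 < x →
      (∑' n : ℕ, liouville n * (n : ℝ) * f (2 * π * (n : ℝ) ^ 2 / x)) ≤
        ∑' n : ℕ, m n * (n : ℝ) * f (2 * π * (n : ℝ) ^ 2 / x) := by
  have hweighted : ∀ b : ℕ → ℝ, (fun x => ∑' n : ℕ, b n * (n : ℝ) * f (2 * π * (n : ℝ) ^ 2 / x))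
      = weightedSum fWeight b := fun b => by
    ext x
    simp only [weightedSum, fWeight, mul_assoc]
  have hliouville := weightedSum_congr fWeight_mul fun _ => liouville_eq_multiplicativeExtension
  have hm : weightedSum fWeight m = weightedSum fWeight
      (multiplicativeExtension fun q => if q ∈ hfin.toFinset then m q else -1) :=
    weightedSum_congr fWeight_mul fun n hn =>
      (eq_multiplicativeExtension hone (fun a b _ _ => hmul a b) hn).trans <|
        multiplicativeExtension_congr fun q hq _ => by
          split_ifs with hbad
          · rfl
          · simpa [hq, liouville_apply_prime hq] using hbad
  intro x hx
  simp only [congrFun (hweighted _), hliouville, hm] at hpos ⊢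
  refine weightedSum_le_weightedSum_multiplicativeExtension (fun _ => summable_fWeight) fWeight_mul
    hpos _ (fun q hq => ?_) hx
  obtain ⟨hq, hne⟩ := hfin.mem_toFinset.mp hq
  rw [liouville_apply_prime hq] at hne
  rcases hval q with h | h | h <;> simp_all
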